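/- Let η : Ω → ℝ³ be a C¹ vector field with det(∇η + I) = 1. Then div η = div Ψ(η), where Ψ(η) is the explicit quadratic-cubic vector field Ψ(η) = -( η₁(∂₂η₂+∂₃η₃) - η₁(∂₂η₃∂₃η₂ - ∂₂η₂∂₃η₃), η₂∂₃η₃ - η₁∂₁η₂ - η₁(∂₁η₂∂₃η₃ - ∂₁η₃∂₃η₂), -η₁∂₁η₃ - η₂∂₂η₃ - η₁(∂₁η₃∂₂η₂ - ∂₁η₂∂₂η₃) )ᵀ. -/

import Mathlib

/-! By the product rule, div Ψ(η) consists of terms η_k ∂_i ∂_j η_l and of products of first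
derivatives. The former cancel in pairs by the symmetry of second derivatives (for the cubic part
this is the Piola identity: the rows of the cofactor matrix of ∇η are divergence free). The latter
add up to -(σ₂(∇η) + det ∇η), where σ₂ is the sum of the principal 2×2 minors, and expanding
det(∇η + I) = 1 + tr ∇η + σ₂(∇η) + det ∇η = 1 shows that this is tr ∇η = div η. -/

open MeasureTheory Matrix Set

noncomputable section

abbrev V3 := Fin 3 → ℝ

/-- Partial derivative `∂_j f` of a scalar function on ℝ³. -/
def pd (j : Fin 3) (f : V3 → ℝ) : V3 → ℝ := fun y => fderiv ℝ f y (Pi.single j 1)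

def jac (ζ : V3 → V3) (y : V3) : Matrix (Fin 3) (Fin 3) ℝ :=
  Matrix.of fun i j => fderiv ℝ ζ y (Pi.single j 1) i

/-- The explicit quadratic–cubic vector field `Ψ(η)` from the paper.
Here `D l j = ∂_j η_l`. -/
def Psi (η : V3 → V3) (y : V3) : V3 :=
  let e : V3 := η y
  let D : Fin 3 → Fin 3 → ℝ := fun l j => fderiv ℝ η y (Pi.single j 1) l
  ![ -(e 0 * (D 1 1 + D 2 2) - e 0 * (D 2 1 * D 1 2 - D 1 1 * D 2 2)),
     -(e 1 * D 2 2 - e 0 * D 1 0 - e 0 * (D 1 0 * D 2 2 - D 2 0 * D 1 2)),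
     -(-(e 0 * D 2 0) - e 1 * D 2 1 - e 0 * (D 2 0 * D 1 1 - D 1 0 * D 2 1)) ]

section PartialDerivatives

variable {f g : V3 → ℝ} {y : V3}

theorem pd_add (j : Fin 3) (hf : DifferentiableAt ℝ f y) (hg : DifferentiableAt ℝ g y) :
    pd j (fun z => f z + g z) y = pd j f y + pd j g y := by
  rw [pd, fderiv_fun_add hf hg]; rfl

theorem pd_sub (j : Fin 3) (hf : DifferentiableAt ℝ f y) (hg : DifferentiableAt ℝ g y) :
    pd j (fun z => f z - g z) y = pd j f y - pd j g y := by
  rw [pd, fderiv_fun_sub hf hg]; rfl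

theorem pd_neg (j : Fin 3) : pd j (fun z => -f z) y = -pd j f y := by
  rw [pd, fderiv_fun_neg]; rfl

theorem pd_mul (j : Fin 3) (hf : DifferentiableAt ℝ f y) (hg : DifferentiableAt ℝ g y) :
    pd j (fun z => f z * g z) y = pd j f y * g y + f y * pd j g y := by
  rw [pd, fderiv_fun_mul hf hg, _root_.add_apply, _root_.smul_apply, _root_.smul_apply,
    smul_eq_mul, smul_eq_mul, add_comm, mul_comm]
  rfl

theorem hasFDerivAt_pd (hf : ContDiff ℝ 2 f) (j : Fin 3) :
    HasFDerivAt (pd j f)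
      ((ContinuousLinearMap.apply ℝ ℝ (Pi.single j 1)).comp (fderiv ℝ (fderiv ℝ f) y)) y := by
  have hf' : DifferentiableAt ℝ (fderiv ℝ f) y :=
    ((hf.fderiv_right (m := 1) (by norm_num)).differentiable one_ne_zero).differentiableAt
  exact (ContinuousLinearMap.apply ℝ ℝ (Pi.single j 1)).hasFDerivAt.comp y hf'.hasFDerivAt

theorem pd_pd_comm (hf : ContDiff ℝ 2 f) (j k : Fin 3) : pd k (pd j f) y = pd j (pd k f) y := by
  rw [pd, pd, (hasFDerivAt_pd hf j).fderiv, (hasFDerivAt_pd hf k).fderiv]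
  exact hf.contDiffAt.isSymmSndFDerivAt (by simp) _ _

end PartialDerivatives

def principalMinorSum {R : Type*} [CommRing R] (A : Matrix (Fin 3) (Fin 3) R) : R :=
  A 0 0 * A 1 1 - A 0 1 * A 1 0 + A 0 0 * A 2 2 - A 0 2 * A 2 0 + A 1 1 * A 2 2 - A 1 2 * A 2 1

theorem det_add_one_fin_three {R : Type*} [CommRing R] (A : Matrix (Fin 3) (Fin 3) R) :
    (A + 1).det = 1 + A.trace + principalMinorSum A + A.det := by
  simp only [det_fin_three, trace_fin_three, principalMinorSum, Matrix.add_apply, one_apply_eq,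
    one_apply_ne, ne_eq, Fin.reduceEq, not_false_eq_true]
  ring

theorem trace_eq_of_det_add_one_eq_one {R : Type*} [CommRing R] {A : Matrix (Fin 3) (Fin 3) R}
    (h : (A + 1).det = 1) : A.trace = -(principalMinorSum A + A.det) := by
  rw [det_add_one_fin_three] at h
  linear_combination h

variable {η : V3 → V3} {y : V3}

theorem jac_apply (hη : DifferentiableAt ℝ η y) (l j : Fin 3) :
    jac η y l j = pd j (fun z => η z l) y := by
  rw [pd, (hasFDerivAt_pi'.1 hη.hasFDerivAt l).fderiv]; rfl

theorem sum_pd_apply_eq_trace_jac (hη : DifferentiableAt ℝ η y) :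
    ∑ i, pd i (fun z => η z i) y = (jac η y).trace := by
  simp only [trace, diag, jac_apply hη]

theorem sum_pd_Psi (hη : ContDiff ℝ 2 η) :
    ∑ i, pd i (fun z => Psi η z i) y = -(principalMinorSum (jac η y) + (jac η y).det) := by
  have hcoord : ∀ l, ContDiff ℝ 2 (fun z => η z l) := fun l => by fun_prop
  -- `hc` and `hD` discharge the differentiability side conditions of the product rule.
  have hc : ∀ l, DifferentiableAt ℝ (fun z => η z l) y := fun l =>
    (hcoord l).differentiable (by norm_num) y
  have hD : ∀ l j, DifferentiableAt ℝ (pd j (fun z => η z l)) y := fun l j =>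
    (hasFDerivAt_pd (hcoord l) j).differentiableAt
  have hfderiv : ∀ z l j, fderiv ℝ η z (Pi.single j 1) l = pd j (fun z => η z l) z := fun z =>
    jac_apply (hη.differentiable (by norm_num) z)
  simp only [Fin.sum_univ_three, Psi, Matrix.cons_val, hfderiv]
  simp (disch := fun_prop) only [pd_mul, pd_add, pd_sub, pd_neg]
  -- Write every second derivative as `∂_k ∂_j` with `j < k`, so that cancelling terms match.
  rw [pd_pd_comm (hcoord 1) 1 0, pd_pd_comm (hcoord 2) 2 0, pd_pd_comm (hcoord 2) 1 0,
    pd_pd_comm (hcoord 1) 2 0, pd_pd_comm (hcoord 2) 2 1, pd_pd_comm (hcoord 1) 2 1]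
  simp only [principalMinorSum, det_fin_three, jac, of_apply, hfderiv]
  ring

/-- if `det(∇η + I) = 1` then `div η = div Ψ(η)`. -/
theorem stmt4 (η : V3 → V3)
    (hη : ContDiff ℝ 2 η)
    (hdet : ∀ y, (jac η y + 1).det = 1) :
    ∀ y : V3, (∑ i, pd i (fun z => η z i) y) = ∑ i, pd i (fun z => Psi η z i) y := by
  intro y
  rw [sum_pd_apply_eq_trace_jac (hη.differentiable (by norm_num) y), sum_pd_Psi hη]
  exact trace_eq_of_det_add_one_eq_one (hdet y)
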